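/- (Theorem 3.5: general correctness of the GPK algorithm for the Generalised Deutsch–Jozsa problem.) Let n ≥ 1 and let f : 𝔽₂ⁿ → 𝔽₂ᵐ satisfy the promise that either (i) f is constant, or (ii) f is balanced, i.e. there are f₁, f₂ ∈ 𝔽₂ᵐ with f₁ ≠ f₂ such that f takes only the values f₁ and f₂, each on exactly 2^(n−1) inputs. Then f is constant if and only if for every i ∈ Fin m the sum Σ_{x ∈ 𝔽₂ⁿ} (−1)^(f(x)·e_i) is nonzero; moreover if f is constant each such sum equals ±2ⁿ, and if f is balanced there exists i ∈ Fin m for which the sum equals 0. -/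

import Mathlib

/-- The sign `(−1)^a ∈ ℂ` associated to a bit `a ∈ 𝔽₂`. -/
noncomputable def sgn (a : ZMod 2) : ℂ := (-1 : ℂ) ^ a.val

/-- The pairing `x·z = Σᵢ xᵢ·zᵢ ∈ 𝔽₂` of two binary strings. -/
def dotp {k : ℕ} (x z : Fin k → ZMod 2) : ZMod 2 := ∑ i, x i * z i

/-- The `i`-th standard basis vector of `𝔽₂ᵏ`. -/
def stdBasis {k : ℕ} (i : Fin k) : Fin k → ZMod 2 :=
  fun j => if j = i then 1 else 0

/-- `f` is balanced: it takes exactly two distinct values `f₁ ≠ f₂`, each on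
exactly `2^(n−1)` inputs. -/
def IsBalancedFn {n m : ℕ} (f : (Fin n → ZMod 2) → (Fin m → ZMod 2)) : Prop :=
  ∃ f₁ f₂ : Fin m → ZMod 2, f₁ ≠ f₂ ∧ (∀ x, f x = f₁ ∨ f x = f₂) ∧
    (Finset.univ.filter (fun x : Fin n → ZMod 2 => f x = f₁)).card = 2 ^ (n - 1) ∧
    (Finset.univ.filter (fun x : Fin n → ZMod 2 => f x = f₂)).card = 2 ^ (n - 1)

open Finset

lemma dotp_stdBasis {k : ℕ} (v : Fin k → ZMod 2) (i : Fin k) :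
    dotp v (stdBasis i) = v i := by
  simp [dotp, stdBasis, mul_ite]

lemma sgn_eq_one_or_eq_neg_one (a : ZMod 2) : sgn a = 1 ∨ sgn a = -1 := by
  fin_cases a <;> simp [sgn, ZMod.val]

lemma sgn_add_sgn_of_ne {a b : ZMod 2} (h : a ≠ b) : sgn a + sgn b = 0 := by
  fin_cases a <;> fin_cases b <;> first | exact absurd rfl h | norm_num [sgn, ZMod.val]

lemma sum_comp_of_forall_eq_or_eq {α β M : Type*} [Fintype α] [DecidableEq β]
    [AddCommMonoid M] {f : α → β} {a b : β} (hab : a ≠ b) (hf : ∀ x, f x = a ∨ f x = b)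
    (g : β → M) :
    ∑ x, g (f x) = #{x | f x = a} • g a + #{x | f x = b} • g b := by
  have hfiber (c : β) : ∑ x with f x = c, g (f x) = #{x | f x = c} • g c := by
    rw [sum_congr rfl fun x hx => by rw [(mem_filter.mp hx).2], sum_const]
  rw [← sum_fiberwise_of_maps_to (t := {a, b}) (g := f) (fun x _ => by simpa using hf x),
    sum_pair hab, hfiber, hfiber]

section
variable {n m : ℕ} (f : (Fin n → ZMod 2) → (Fin m → ZMod 2))

lemma sum_sgn_dotp_stdBasis_of_const {c : Fin m → ZMod 2} (hc : ∀ x, f x = c) (i : Fin m) :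
    ∑ x, sgn (dotp (f x) (stdBasis i)) = 2 ^ n * sgn (c i) := by
  simp [hc, dotp_stdBasis, sum_const, nsmul_eq_mul]

lemma sum_sgn_dotp_stdBasis_eq_pow_or_eq_neg_pow_of_const {c : Fin m → ZMod 2} (hc : ∀ x, f x = c)
    (i : Fin m) :
    ∑ x, sgn (dotp (f x) (stdBasis i)) = 2 ^ n ∨
      ∑ x, sgn (dotp (f x) (stdBasis i)) = -(2 ^ n) := by
  rw [sum_sgn_dotp_stdBasis_of_const f hc]
  rcases sgn_eq_one_or_eq_neg_one (c i) with h | h <;> simp [h]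

/-- A coordinate where the two values differ sees each sign on exactly half the inputs. -/
lemma IsBalancedFn.exists_sum_sgn_dotp_stdBasis_eq_zero (hf : IsBalancedFn f) :
    ∃ i, ∑ x, sgn (dotp (f x) (stdBasis i)) = 0 := by
  obtain ⟨f₁, f₂, hne, hval, h₁, h₂⟩ := hf
  obtain ⟨i, hi⟩ := Function.ne_iff.mp hne
  refine ⟨i, ?_⟩
  rw [sum_comp_of_forall_eq_or_eq hne hval fun v => sgn (dotp v (stdBasis i)), h₁, h₂,
    ← smul_add, dotp_stdBasis, dotp_stdBasis, sgn_add_sgn_of_ne hi, smul_zero]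

end

theorem gpk_deutsch_jozsa_general_general {n m : ℕ}
    (f : (Fin n → ZMod 2) → (Fin m → ZMod 2))
    (hprom : (∃ c, ∀ x, f x = c) ∨ IsBalancedFn f) :
    ((∃ c, ∀ x, f x = c) ↔
      ∀ i : Fin m,
        (∑ x : Fin n → ZMod 2, sgn (dotp (f x) (stdBasis i))) ≠ 0) ∧
    ((∃ c, ∀ x, f x = c) →
      ∀ i : Fin m,
        (∑ x : Fin n → ZMod 2, sgn (dotp (f x) (stdBasis i))) = 2 ^ n ∨
        (∑ x : Fin n → ZMod 2, sgn (dotp (f x) (stdBasis i))) = -(2 ^ n)) ∧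
    (IsBalancedFn f →
      ∃ i : Fin m,
        (∑ x : Fin n → ZMod 2, sgn (dotp (f x) (stdBasis i))) = 0) := by
  have hconst : (∃ c, ∀ x, f x = c) → ∀ i : Fin m,
      ∑ x, sgn (dotp (f x) (stdBasis i)) = 2 ^ n ∨
        ∑ x, sgn (dotp (f x) (stdBasis i)) = -(2 ^ n) :=
    fun ⟨c, hc⟩ => sum_sgn_dotp_stdBasis_eq_pow_or_eq_neg_pow_of_const f hc
  refine ⟨⟨fun hc i hzero => ?_, fun hall => ?_⟩, hconst,
    IsBalancedFn.exists_sum_sgn_dotp_stdBasis_eq_zero f⟩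
  · rcases hconst hc i with h | h <;> rw [hzero, eq_comm] at h <;> simp at h
  · refine hprom.resolve_right fun hbal => ?_
    obtain ⟨i, hi⟩ := hbal.exists_sum_sgn_dotp_stdBasis_eq_zero
    exact hall i hi

/-- Theorem 3.5: general correctness of the GPK algorithm for the Generalised
Deutsch–Jozsa problem.  Under the promise, `f` is constant iff all the sums
`Σ_x (−1)^(f(x)·e_i)` are nonzero; in the constant case each sum is `±2ⁿ`, and
in the balanced case some sum equals `0`. -/
theorem gpk_deutsch_jozsa_general {n m : ℕ} (hn : 1 ≤ n)
    (f : (Fin n → ZMod 2) → (Fin m → ZMod 2))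
    (hprom : (∃ c, ∀ x, f x = c) ∨ IsBalancedFn f) :
    ((∃ c, ∀ x, f x = c) ↔
      ∀ i : Fin m,
        (∑ x : Fin n → ZMod 2, sgn (dotp (f x) (stdBasis i))) ≠ 0) ∧
    ((∃ c, ∀ x, f x = c) →
      ∀ i : Fin m,
        (∑ x : Fin n → ZMod 2, sgn (dotp (f x) (stdBasis i))) = 2 ^ n ∨
        (∑ x : Fin n → ZMod 2, sgn (dotp (f x) (stdBasis i))) = -(2 ^ n)) ∧
    (IsBalancedFn f →
      ∃ i : Fin m,
        (∑ x : Fin n → ZMod 2, sgn (dotp (f x) (stdBasis i))) = 0) :=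
  gpk_deutsch_jozsa_general_general f hprom
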